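/- Fix d > 1 and 0 < λ < ∞, and let f_λ denote the unique fixed point of the truncated cavity operator T, extended to ℝ by 1 on (-∞,-λ] and 0 on (λ,∞). Then for all x ≥ 0, 1 - f_λ(-x) ≤ exp(-x^d / e). -/

import Mathlib

/-!
Let `a = f_λ(0)`. Splitting the cavity integral of `y ≥ 0` at `0`, monotonicity of `f_λ`
(`f_λ ≥ a` on `[-y, 0]`) and of the kernel in `y` (on `[0, λ]`) give `f_λ(y) ≤ a e^{-a y^d}`.
With `x^d + (y - x)^d ≤ y^d`, this bounds `d ∫_x^λ (y - x)^{d-1} f_λ(y) dy` by `e^{-a x^d}`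
times `∫ d (y - x)^{d-1} a e^{-a (y-x)^d} dy ≤ 1`. At `x = 0` this reads
`a = e^{-d ∫ …} ≥ e^{-1}`, and in general
`1 - f_λ(-x) = 1 - e^{-d ∫ …} ≤ d ∫ … ≤ e^{-a x^d} ≤ e^{-x^d / e}`.
-/

open MeasureTheory Set

/-- The truncated cavity operator `T`. -/
noncomputable def T (d lam : ℝ) (f : ℝ → ℝ) : ℝ → ℝ :=
  fun x => Real.exp (-(d * ∫ y in (-x)..lam, (x + y) ^ (d - 1) * f y))

/-- `f` is the fixed point of the truncated cavity operator on `[-λ, λ]`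
(non-increasing and `[0,1]`-valued there), extended to `ℝ` by `1` on `(-∞, -λ]`
and `0` on `(λ, ∞)`. -/
def ExtFixedPoint (d lam : ℝ) (f : ℝ → ℝ) : Prop :=
  AntitoneOn f (Icc (-lam) lam) ∧
  (∀ x ∈ Icc (-lam) lam, f x ∈ Icc (0 : ℝ) 1) ∧
  (∀ x ≤ -lam, f x = 1) ∧ (∀ x > lam, f x = 0) ∧
  (∀ x ∈ Icc (-lam) lam, T d lam f x = f x)

open Real

lemma integral_mul_rpow_mul_exp_neg {d : ℝ} (hd : 1 ≤ d) (A c b : ℝ) :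
    ∫ y in c..b, A * (d * (y - c) ^ (d - 1) * exp (-(A * (y - c) ^ d)))
      = 1 - exp (-(A * (b - c) ^ d)) := by
  have hderiv : ∀ y ∈ uIcc c b, HasDerivAt (fun t => -exp (-(A * (t - c) ^ d)))
      (A * (d * (y - c) ^ (d - 1) * exp (-(A * (y - c) ^ d)))) y := fun y _ => by
    refine ((((hasDerivAt_id y).sub_const c).rpow_const (Or.inr hd)).const_mul A).neg.exp.neg
      |>.congr_deriv ?_
    simp only [id, Pi.neg_apply]
    ring
  rw [intervalIntegral.integral_eq_sub_of_hasDerivAt hderiv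
    (Continuous.intervalIntegrable (by fun_prop (disch := linarith)) _ _),
    sub_self, zero_rpow (by linarith), mul_zero, neg_zero, exp_zero]
  ring

noncomputable def cavityIntegral (d lam : ℝ) (f : ℝ → ℝ) (x : ℝ) : ℝ :=
  ∫ y in (-x)..lam, (x + y) ^ (d - 1) * f y

namespace ExtFixedPoint

variable {d lam : ℝ} {f : ℝ → ℝ}

lemma mem_Icc (hf : ExtFixedPoint d lam f) (y : ℝ) : f y ∈ Icc (0 : ℝ) 1 := by
  obtain ⟨-, hmem, hone, hzero, -⟩ := hf
  rcases le_or_gt y (-lam) with hy | hy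
  · simp [hone y hy]
  rcases le_or_gt y lam with hy' | hy'
  · exact hmem y ⟨hy.le, hy'⟩
  · simp [hzero y hy']

lemma lam_nonneg (hf : ExtFixedPoint d lam f) : 0 ≤ lam := by
  by_contra! hlam
  have h := (hf.2.2.1 0 (by linarith)).symm.trans (hf.2.2.2.1 0 hlam)
  norm_num at h

lemma antitone (hf : ExtFixedPoint d lam f) : Antitone f := by
  intro x y hxy
  rcases le_or_gt x (-lam) with hx | hx
  · rw [hf.2.2.1 x hx]
    exact (hf.mem_Icc y).2
  rcases le_or_gt y lam with hy | hy
  · exact hf.1 ⟨hx.le, hxy.trans hy⟩ ⟨by linarith, hy⟩ hxy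
  · rw [hf.2.2.2.1 y hy]
    exact (hf.mem_Icc x).1

lemma apply_eq_exp (hf : ExtFixedPoint d lam f) {x : ℝ} (hx : x ∈ Icc (-lam) lam) :
    f x = exp (-(d * cavityIntegral d lam f x)) :=
  (hf.2.2.2.2 x hx).symm

lemma intervalIntegrable_rpow_mul (hf : ExtFixedPoint d lam f) (hd : 1 ≤ d) (c a b : ℝ) :
    IntervalIntegrable (fun y => (c + y) ^ (d - 1) * f y) volume a b :=
  hf.antitone.intervalIntegrable.continuousOn_mul
    (Continuous.continuousOn (by fun_prop (disch := linarith)))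

lemma cavityIntegral_zero_add_le (hf : ExtFixedPoint d lam f) (hd : 1 ≤ d) {y : ℝ}
    (hy : 0 ≤ y) :
    f 0 * y ^ d / d + cavityIntegral d lam f 0 ≤ cavityIntegral d lam f y := by
  have hint := hf.intervalIntegrable_rpow_mul hd
  have hleft : f 0 * y ^ d / d ≤ ∫ t in (-y)..0, (y + t) ^ (d - 1) * f t := by
    have hconst : ∫ t in (-y)..0, (y + t) ^ (d - 1) * f 0 = f 0 * y ^ d / d := by
      rw [intervalIntegral.integral_mul_const,
        intervalIntegral.integral_comp_add_left (· ^ (d - 1)), add_neg_cancel, add_zero,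
        integral_rpow (Or.inl (by linarith)), sub_add_cancel, zero_rpow (by linarith)]
      ring
    rw [← hconst]
    refine intervalIntegral.integral_mono_on (by linarith)
      (Continuous.intervalIntegrable (by fun_prop (disch := linarith)) _ _) (hint y _ _)
      fun t ht => ?_
    exact mul_le_mul_of_nonneg_left (hf.antitone ht.2) (rpow_nonneg (by linarith [ht.1]) _)
  have hright : cavityIntegral d lam f 0 ≤ ∫ t in (0 : ℝ)..lam, (y + t) ^ (d - 1) * f t := by
    rw [cavityIntegral, neg_zero]
    refine intervalIntegral.integral_mono_on hf.lam_nonneg (hint 0 _ _) (hint y _ _)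
      fun t ht => ?_
    exact mul_le_mul_of_nonneg_right
      (rpow_le_rpow (by linarith [ht.1]) (by linarith [ht.1]) (by linarith)) (hf.mem_Icc t).1
  have hsplit : (∫ t in (-y)..0, (y + t) ^ (d - 1) * f t)
      + ∫ t in (0 : ℝ)..lam, (y + t) ^ (d - 1) * f t = cavityIntegral d lam f y :=
    intervalIntegral.integral_add_adjacent_intervals (hint y _ _) (hint y _ _)
  linarith

lemma apply_le_mul_exp (hf : ExtFixedPoint d lam f) (hd : 1 ≤ d) {y : ℝ}
    (hy : y ∈ Icc 0 lam) : f y ≤ f 0 * exp (-(f 0 * y ^ d)) := by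
  have h0 : (0 : ℝ) ∈ Icc (-lam) lam := ⟨by linarith [hf.lam_nonneg], hf.lam_nonneg⟩
  have hd0 : 0 < d := by linarith
  have hlower : f 0 * y ^ d + d * cavityIntegral d lam f 0 ≤ d * cavityIntegral d lam f y := by
    have := mul_le_mul_of_nonneg_left (hf.cavityIntegral_zero_add_le hd hy.1) hd0.le
    rwa [mul_add, mul_div_cancel₀ _ hd0.ne'] at this
  calc f y = exp (-(d * cavityIntegral d lam f y)) :=
        hf.apply_eq_exp ⟨by linarith [hy.1, hf.lam_nonneg], hy.2⟩
    _ ≤ exp (-(f 0 * y ^ d + d * cavityIntegral d lam f 0)) := exp_le_exp.2 (by linarith)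
    _ = f 0 * exp (-(f 0 * y ^ d)) := by
        rw [neg_add, exp_add, mul_comm, ← hf.apply_eq_exp h0]

lemma mul_cavityIntegral_neg_le (hf : ExtFixedPoint d lam f) (hd : 1 ≤ d) {x : ℝ}
    (hx : x ∈ Icc 0 lam) :
    d * cavityIntegral d lam f (-x) ≤ exp (-(f 0 * x ^ d)) := by
  set a := f 0
  have ha : 0 ≤ a := (hf.mem_Icc 0).1
  have hpointwise : ∀ y ∈ Icc x lam, d * ((-x + y) ^ (d - 1) * f y)
      ≤ exp (-(a * x ^ d)) * (a * (d * (y - x) ^ (d - 1) * exp (-(a * (y - x) ^ d)))) := by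
    intro y hy
    have hsuper : x ^ d + (y - x) ^ d ≤ y ^ d := by
      simpa using add_rpow_le_rpow_add hx.1 (sub_nonneg.2 hy.1) hd
    have hfy : f y ≤ a * (exp (-(a * x ^ d)) * exp (-(a * (y - x) ^ d))) := by
      refine (hf.apply_le_mul_exp hd ⟨hx.1.trans hy.1, hy.2⟩).trans ?_
      rw [← exp_add]
      gcongr
      linarith [mul_le_mul_of_nonneg_left hsuper ha]
    calc d * ((-x + y) ^ (d - 1) * f y)
        ≤ d * ((y - x) ^ (d - 1) * (a * (exp (-(a * x ^ d)) * exp (-(a * (y - x) ^ d))))) := by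
          rw [neg_add_eq_sub]
          gcongr
          exact rpow_nonneg (sub_nonneg.2 hy.1) _
      _ = _ := by ring
  calc d * cavityIntegral d lam f (-x)
      = ∫ y in x..lam, d * ((-x + y) ^ (d - 1) * f y) := by
        rw [cavityIntegral, neg_neg, intervalIntegral.integral_const_mul]
    _ ≤ ∫ y in x..lam, exp (-(a * x ^ d)) *
          (a * (d * (y - x) ^ (d - 1) * exp (-(a * (y - x) ^ d)))) :=
        intervalIntegral.integral_mono_on hx.2
          ((hf.intervalIntegrable_rpow_mul hd _ _ _).const_mul d)
          (Continuous.intervalIntegrable (by fun_prop (disch := linarith)) _ _) hpointwise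
    _ = exp (-(a * x ^ d)) * (1 - exp (-(a * (lam - x) ^ d))) := by
        rw [intervalIntegral.integral_const_mul, integral_mul_rpow_mul_exp_neg hd]
    _ ≤ exp (-(a * x ^ d)) := by
        have := exp_pos (-(a * (lam - x) ^ d))
        nlinarith [exp_pos (-(a * x ^ d))]

lemma exp_neg_one_le_apply_zero (hf : ExtFixedPoint d lam f) (hd : 1 ≤ d) :
    exp (-1) ≤ f 0 := by
  have h := hf.mul_cavityIntegral_neg_le hd ⟨le_rfl, hf.lam_nonneg⟩
  rw [neg_zero, zero_rpow (by linarith), mul_zero, neg_zero, exp_zero] at h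
  rw [hf.apply_eq_exp ⟨by linarith [hf.lam_nonneg], hf.lam_nonneg⟩]
  gcongr

end ExtFixedPoint

theorem fixedPoint_uniform_lower_general (d lam : ℝ) (hd : 1 < d)
    (flam : ℝ → ℝ) (hflam : ExtFixedPoint d lam flam) :
    ∀ x : ℝ, 0 ≤ x → 1 - flam (-x) ≤ Real.exp (-(x ^ d / Real.exp 1)) := by
  intro x hx
  rcases le_or_gt lam x with hxlam | hxlam
  · rw [hflam.2.2.1 (-x) (by linarith), sub_self]
    exact (exp_pos _).le
  calc 1 - flam (-x)
      = 1 - exp (-(d * cavityIntegral d lam flam (-x))) := by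
        rw [hflam.apply_eq_exp ⟨by linarith, by linarith⟩]
    _ ≤ d * cavityIntegral d lam flam (-x) := by
        linarith [one_sub_le_exp_neg (d * cavityIntegral d lam flam (-x))]
    _ ≤ exp (-(flam 0 * x ^ d)) := hflam.mul_cavityIntegral_neg_le hd.le ⟨hx, hxlam.le⟩
    _ ≤ exp (-(x ^ d / exp 1)) := by
        rw [div_eq_mul_inv, ← exp_neg, mul_comm]
        gcongr
        exact hflam.exp_neg_one_le_apply_zero hd.le

/-- for all `x ≥ 0`, `1 - f_λ(-x) ≤ exp(-x^d / e)`. -/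
theorem fixedPoint_uniform_lower (d lam : ℝ) (hd : 1 < d) (hlam : 0 < lam)
    (flam : ℝ → ℝ) (hflam : ExtFixedPoint d lam flam) :
    ∀ x : ℝ, 0 ≤ x → 1 - flam (-x) ≤ Real.exp (-(x ^ d / Real.exp 1)) :=
  fixedPoint_uniform_lower_general d lam hd flam hflam
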